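/- arXiv:2412.04250 — 2 statements merged into one kernel-verified Lean document; each statement's English description precedes it below -/
import Mathlib

section
/- Let G = G₁ * ⋯ * Gₙ be a free product with distinct indices i, j, and let x ∈ Gᵢ, y ∈ Gⱼ. Let A, B ⊆ {1,...,n} \ {i, j} be disjoint. Then the Whitehead automorphisms (A, x) and (B, y) commute in Aut(G). -/
/-- `H : ι → Subgroup G` is an (internal) free product decomposition of `G`:
the canonical map from the external free product of the `H i` to `G` is bijective. -/
def IsFreeProductOf {ι : Type*} {G : Type*} [Group G] (H : ι → Subgroup G) : Prop :=
  Function.Bijective (Monoid.CoprodI.lift fun i => (H i).subtype)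


/-- `ψ` is the Whitehead automorphism `(A, x)`: it conjugates each factor `H j` with
`j ∈ A` pointwise by `x` (i.e. `g ↦ x⁻¹ g x`), and fixes every other factor pointwise. -/
def IsWhitehead {ι : Type*} {G : Type*} [Group G] (H : ι → Subgroup G)
    (A : Set ι) (x : G) (ψ : MulAut G) : Prop :=
  (∀ j ∈ A, ∀ g ∈ H j, ψ g = x⁻¹ * g * x) ∧ ∀ j ∉ A, ∀ g ∈ H j, ψ g = g

theorem IsFreeProductOf.iSup_eq_top {ι G : Type*} [Group G] {H : ι → Subgroup G}
    (hfp : IsFreeProductOf H) : ⨆ i, H i = ⊤ := by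
  rw [← MonoidHom.range_eq_top.mpr hfp.2, Monoid.CoprodI.range_eq_iSup]
  simp only [Subgroup.range_subtype]

theorem MonoidHom.eq_of_eqOn_of_iSup_eq_top {ι G M : Type*} [Group G] [Monoid M]
    {H : ι → Subgroup G} (hH : ⨆ i, H i = ⊤) {f g : G →* M}
    (h : ∀ i, Set.EqOn f g (H i)) : f = g :=
  eq_of_eqOn_dense (by rw [← Subgroup.iSup_eq_closure, hH]) fun _ hu ↦
    let ⟨i, hi⟩ := Set.mem_iUnion.mp hu; h i hi

namespace IsWhitehead

variable {ι G : Type*} [Group G] {H : ι → Subgroup G} {A B : Set ι} {x y : G}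
  {ψ φ : MulAut G}

-- On a factor in `A` only `ψ` acts and `φ` fixes its conjugator `x`; symmetrically on `B`.
theorem apply_apply_comm (hψ : IsWhitehead H A x ψ) (hφ : IsWhitehead H B y φ)
    (hAB : Disjoint A B) (hφx : φ x = x) (hψy : ψ y = y) {k : ι} {g : G} (hg : g ∈ H k) :
    ψ (φ g) = φ (ψ g) := by
  by_cases hkA : k ∈ A
  · have hkB : k ∉ B := hAB.notMem_of_mem_left hkA
    rw [hφ.2 k hkB g hg, hψ.1 k hkA g hg, map_mul, map_mul, map_inv, hφx, hφ.2 k hkB g hg]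
  by_cases hkB : k ∈ B
  · rw [hφ.1 k hkB g hg, hψ.2 k hkA g hg, map_mul, map_mul, map_inv, hψy, hψ.2 k hkA g hg,
      hφ.1 k hkB g hg]
  · rw [hφ.2 k hkB g hg, hψ.2 k hkA g hg, hφ.2 k hkB g hg]

theorem commute (hψ : IsWhitehead H A x ψ) (hφ : IsWhitehead H B y φ)
    (hH : ⨆ k, H k = ⊤) (hAB : Disjoint A B) (hφx : φ x = x) (hψy : ψ y = y) :
    Commute ψ φ := by
  have : (ψ * φ : MulAut G).toMonoidHom = (φ * ψ : MulAut G).toMonoidHom :=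
    MonoidHom.eq_of_eqOn_of_iSup_eq_top hH fun _ _ hg ↦
      hψ.apply_apply_comm hφ hAB hφx hψy hg
  exact MulEquiv.toMonoidHom_injective this

end IsWhitehead

theorem stmt_10_general {n : ℕ} {G : Type*} [Group G] (H : Fin n → Subgroup G)
    (hfp : IsFreeProductOf H) (i j : Fin n)
    (x y : G) (hx : x ∈ H i) (hy : y ∈ H j)
    (A B : Set (Fin n)) (hA : A ⊆ ({i, j} : Set (Fin n))ᶜ)
    (hB : B ⊆ ({i, j} : Set (Fin n))ᶜ) (hdisj : Disjoint A B)
    (ψ φ : MulAut G) (hψ : IsWhitehead H A x ψ) (hφ : IsWhitehead H B y φ) :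
    ψ * φ = φ * ψ := by
  have hiB : i ∉ B := fun h ↦ hB h (Or.inl rfl)
  have hjA : j ∉ A := fun h ↦ hA h (Or.inr rfl)
  exact (hψ.commute hφ hfp.iSup_eq_top hdisj (hφ.2 i hiB x hx) (hψ.2 j hjA y hy)).eq

/-- Whitehead automorphisms `(A, x)` and `(B, y)` with `x ∈ Gᵢ`, `y ∈ Gⱼ`,
`i ≠ j`, and disjoint `A, B ⊆ {1,…,n} \ {i,j}` commute in `Aut(G)`. -/
theorem stmt_10 {n : ℕ} {G : Type*} [Group G] (H : Fin n → Subgroup G)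
    (hfp : IsFreeProductOf H) (i j : Fin n) (hij : i ≠ j)
    (x y : G) (hx : x ∈ H i) (hy : y ∈ H j)
    (A B : Set (Fin n)) (hA : A ⊆ ({i, j} : Set (Fin n))ᶜ)
    (hB : B ⊆ ({i, j} : Set (Fin n))ᶜ) (hdisj : Disjoint A B)
    (ψ φ : MulAut G) (hψ : IsWhitehead H A x ψ) (hφ : IsWhitehead H B y φ) :
    ψ * φ = φ * ψ :=
  stmt_10_general H hfp i j x y hx hy A B hA hB hdisj ψ φ hψ hφ
end

section
/- Let G = G₁ * ⋯ * Gₙ be a free product with distinct indices i, j, k, and let x ∈ Gᵢ. Let ψ be the Whitehead automorphism conjugating both Gⱼ and Gₖ pointwise by x (and fixing every other factor pointwise), i.e. ψ = ({Gⱼ, Gₖ}, x). Then for any y ∈ Gⱼ, ψ commutes in Aut(G) with the Whitehead automorphism ({Gₖ}, y) conjugating Gₖ pointwise by y. -/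
/-!
An automorphism of a free product is determined by its values on the factors, so it suffices
to check `ψ (φ g) = φ (ψ g)` for `g` in a single factor `Gₗ`. For `l ∉ {j, k}` both sides are `g`.
For `l = j ≠ k` both sides are `x⁻¹ g x`, because `φ` fixes `x ∈ Gᵢ` and `g`. For `l = k` both sides
are `x⁻¹ y⁻¹ g y x`: `ψ` sends `y⁻¹ g y` to `(x⁻¹ y⁻¹ x)(x⁻¹ g x)(x⁻¹ y x)`, while `φ` fixes
`x` and sends `g` to `y⁻¹ g y`.
-/

section

variable {ι G : Type*} [Group G] {H : ι → Subgroup G}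

theorem IsFreeProductOf.closure_iUnion_eq_top (hfp : IsFreeProductOf H) :
    Subgroup.closure (⋃ i, (H i : Set G)) = ⊤ := by
  rw [Subgroup.closure_iUnion]
  simp_rw [Subgroup.closure_eq]
  simpa [Monoid.CoprodI.range_eq_iSup, Subgroup.range_subtype] using
    (MonoidHom.range_eq_top (f := Monoid.CoprodI.lift fun i => (H i).subtype)).2 hfp.2

namespace IsWhitehead

variable {A : Set ι} {x : G} {ψ : MulAut G} {j : ι} {g : G}

theorem apply_of_mem (hψ : IsWhitehead H A x ψ) (hj : j ∈ A) (hg : g ∈ H j) :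
    ψ g = x⁻¹ * g * x :=
  hψ.1 j hj g hg

theorem apply_of_notMem (hψ : IsWhitehead H A x ψ) (hj : j ∉ A) (hg : g ∈ H j) : ψ g = g :=
  hψ.2 j hj g hg

theorem apply_apply_comm_of_mem {i j k l : ι} (hij : i ≠ j) (hik : i ≠ k)
    {x y : G} (hx : x ∈ H i) (hy : y ∈ H j) {ψ φ : MulAut G}
    (hψ : IsWhitehead H {j, k} x ψ) (hφ : IsWhitehead H {k} y φ) (hg : g ∈ H l) :
    ψ (φ g) = φ (ψ g) := by
  have hψx : ψ x = x := hψ.apply_of_notMem (by simp [hij, hik]) hx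
  have hφx : φ x = x := hφ.apply_of_notMem (by simpa using hik) hx
  by_cases hlk : l = k
  · subst hlk
    have hψy : ψ y = x⁻¹ * y * x := hψ.apply_of_mem (by simp) hy
    have hψg : ψ g = x⁻¹ * g * x := hψ.apply_of_mem (by simp) hg
    have hφg : φ g = y⁻¹ * g * y := hφ.apply_of_mem rfl hg
    simp only [hφg, hψg, map_mul, map_inv, hψy, hφx]
    group
  · have hφg : φ g = g := hφ.apply_of_notMem (by simpa using hlk) hg
    by_cases hlj : l = j
    · subst hlj
      rw [hφg, hψ.apply_of_mem (by simp) hg]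
      simp only [map_mul, map_inv, hφx, hφg]
    · rw [hφg, hψ.apply_of_notMem (by simp [hlj, hlk]) hg, hφg]

end IsWhitehead

end

theorem stmt_15_general {n : ℕ} {G : Type*} [Group G] (H : Fin n → Subgroup G)
    (hfp : IsFreeProductOf H) (i j k : Fin n)
    (hij : i ≠ j) (hik : i ≠ k)
    (x y : G) (hx : x ∈ H i) (hy : y ∈ H j)
    (ψ φ : MulAut G)
    (hψ : IsWhitehead H {j, k} x ψ) (hφ : IsWhitehead H {k} y φ) :
    ψ * φ = φ * ψ := by
  apply MulEquiv.toMonoidHom_injective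
  refine MonoidHom.eq_of_eqOn_dense hfp.closure_iUnion_eq_top ?_
  rintro g ⟨_, ⟨l, rfl⟩, hg⟩
  exact hψ.apply_apply_comm_of_mem hij hik hx hy hφ hg

/-- the Whitehead automorphism `({Gⱼ, Gₖ}, x)` with `x ∈ Gᵢ` commutes
with the Whitehead automorphism `({Gₖ}, y)` with `y ∈ Gⱼ`, for distinct `i, j, k`. -/
theorem stmt_15 {n : ℕ} {G : Type*} [Group G] (H : Fin n → Subgroup G)
    (hfp : IsFreeProductOf H) (i j k : Fin n)
    (hij : i ≠ j) (hik : i ≠ k) (hjk : j ≠ k)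
    (x y : G) (hx : x ∈ H i) (hy : y ∈ H j)
    (ψ φ : MulAut G)
    (hψ : IsWhitehead H {j, k} x ψ) (hφ : IsWhitehead H {k} y φ) :
    ψ * φ = φ * ψ :=
  stmt_15_general H hfp i j k hij hik x y hx hy ψ φ hψ hφ
end
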